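/- Let p_n ∈ (0,1) with p_n = ω(log n / n). For each n sample G_{n+1} ~ G(n+1, p_n) and let G_n be its induced subgraph on the vertex set {1,…,n}; let d̄ = (n−1)p_n. Then there exists a constant c > 0 such that with high probability max_{1 ≤ u < v ≤ n} |R^{(n+1)}_{uv} − R^{(n)}_{uv}| ≤ c/d̄², where R^{(n)} and R^{(n+1)} denote the renormalized effective resistances in G_n and G_{n+1} respectively. -/

import Mathlib

open scoped Classical BigOperators ENNReal
open Filter MeasureTheory Topology Asymptotics ProbabilityTheory

noncomputable section

namespace RP

variable {V : Type*} [Fintype V]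

/-- A unit flow from `u` to `v` on the graph `G`. -/
def IsUnitFlow (G : SimpleGraph V) (u v : V) (f : V → V → ℝ) : Prop :=
  (∀ a b, f a b = - f b a) ∧
  (∀ a b, ¬ G.Adj a b → f a b = 0) ∧
  (∀ w, ∑ x, f w x = (if w = u then (1:ℝ) else 0) - (if w = v then (1:ℝ) else 0))

/-- Energy of a flow (each undirected edge counted once). -/
def energy (f : V → V → ℝ) : ℝ := (1/2) * ∑ a, ∑ b, (f a b)^2

/-- Effective resistance as infimum of energies of unit flows, `∞` if disconnected. -/
def effRes (G : SimpleGraph V) (u v : V) : ℝ≥0∞ :=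
  sInf {x : ℝ≥0∞ | ∃ f, IsUnitFlow G u v f ∧ x = ENNReal.ofReal (energy f)}

/-- Renormalized effective resistance `R̂/(R̂+1)`, equal to 1 when disconnected. -/
def renRes (G : SimpleGraph V) (u v : V) : ℝ :=
  if effRes G u v = ⊤ then 1
  else (effRes G u v).toReal / ((effRes G u v).toReal + 1)

/-- Renormalized resistance distance, summed over pairs `u < v` in `S`. -/
def RDon [LinearOrder V] (S : Finset V) (G₁ G₂ : SimpleGraph V) : ℝ :=
  ∑ p ∈ (S ×ˢ S).filter (fun p => p.1 < p.2),
    |renRes G₁ p.1 p.2 - renRes G₂ p.1 p.2|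

/-- Renormalized resistance distance on a full common vertex set. -/
def RD [LinearOrder V] (G₁ G₂ : SimpleGraph V) : ℝ := RDon Finset.univ G₁ G₂

/-- Sample space for random graphs on `n` vertices: one Boolean per potential edge. -/
def EdgeSpace (n : ℕ) : Type := Sym2 (Fin n) → Bool

instance (n : ℕ) : MeasurableSpace (EdgeSpace n) := by unfold EdgeSpace; infer_instance

/-- Bernoulli measure on `Bool`. -/
def bernoulliMeasure (x : ℝ≥0∞) : Measure Bool :=
  (PMF.bernoulli (min x 1).toNNReal
    (by simpa using ENNReal.toNNReal_mono ENNReal.one_ne_top (min_le_right x 1))).toMeasure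

/-- The Erdős–Rényi measure `G(n,p)`. -/
def erMeasure (n : ℕ) (p : ℝ) : Measure (EdgeSpace n) :=
  Measure.pi fun _ => bernoulliMeasure (ENNReal.ofReal p)

/-- Edge probabilities for the balanced two-community stochastic blockmodel:
vertex `i` carries the label `i+1`; the communities are formed by odd/even labels. -/
def sbmPe (n : ℕ) (p q : ℝ) : Sym2 (Fin n) → ℝ≥0∞ :=
  Sym2.lift ⟨fun u v => if (u.val + v.val) % 2 = 0 then ENNReal.ofReal p else ENNReal.ofReal q,
    fun u v => by dsimp only; rw [Nat.add_comm ↑u ↑v]⟩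

/-- The stochastic blockmodel measure `G(n,p,q)`. -/
def sbmMeasure (n : ℕ) (p q : ℝ) : Measure (EdgeSpace n) :=
  Measure.pi fun e => bernoulliMeasure (sbmPe n p q e)

/-- The simple graph determined by a point of the sample space. -/
def graphOf {n : ℕ} (ω : EdgeSpace n) : SimpleGraph (Fin n) where
  Adj u v := u ≠ v ∧ ω s(u, v) = true
  symm := ⟨fun u v h => ⟨h.1.symm, by rw [Sym2.eq_swap]; exact h.2⟩⟩
  loopless := ⟨fun u h => h.1 rfl⟩

/-- `u` and `v` belong to the same community (labels of equal parity). -/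
def sameComm {n : ℕ} (u v : Fin n) : Prop := u.val % 2 = v.val % 2

/-- Number of cross-community edges. -/
def crossCount {n : ℕ} (G : SimpleGraph (Fin n)) : ℕ :=
  ((Finset.univ : Finset (Fin n × Fin n)).filter
    (fun p => p.1 < p.2 ∧ G.Adj p.1 p.2 ∧ ¬ sameComm p.1 p.2)).card

/-- Total number of edges. -/
def edgeCount {n : ℕ} (G : SimpleGraph (Fin n)) : ℕ :=
  ((Finset.univ : Finset (Fin n × Fin n)).filter
    (fun p => p.1 < p.2 ∧ G.Adj p.1 p.2)).card

/-- Degree of vertex `u`. -/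
def deg {n : ℕ} (G : SimpleGraph (Fin n)) (u : Fin n) : ℕ :=
  (Finset.univ.filter (fun v => G.Adj u v)).card

/-- The induced subgraph on `{1,…,n}`, with vertex `n+1` kept as an isolated vertex. -/
def dropLast {n : ℕ} (G : SimpleGraph (Fin (n+1))) : SimpleGraph (Fin (n+1)) where
  Adj u v := G.Adj u v ∧ u ≠ Fin.last n ∧ v ≠ Fin.last n
  symm := ⟨fun u v h => ⟨h.1.symm, h.2.2, h.2.1⟩⟩
  loopless := ⟨fun u h => G.irrefl h.1⟩

/-- `h(n,k) = ⌊n/2⌋ + ⌈n/2⌉·k/(1+k)`. -/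
def hfun (n k : ℕ) : ℝ := ((n / 2 : ℕ) : ℝ) + (((n + 1) / 2 : ℕ) : ℝ) * (k : ℝ) / (1 + (k : ℝ))

/-- Size of the first community (odd labels). -/
def nOne (n : ℕ) : ℕ := (n + 1) / 2

/-- Size of the second community (even labels). -/
def nTwo (n : ℕ) : ℕ := n / 2


/-!
Write `T = {1,…,n}`, `G = G_n` and `G' = G_{n+1}`. With high probability every cut `(S, T \ S)`
with `|S| ≤ n/2` carries at least `|S| n p / 4` edges of `G` and every degree is at most `2 n p`
(Chernoff bounds and a union bound over cuts), so by Cheeger's inequality the Laplacian of `G`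
has spectral gap `γ ≥ n p / 64` on `T`.

Let `φ` be the equilibrium potential of `G` from `u` to `v`, centred on `T`, so that
`R := φ u - φ v = R̂_G(u, v)`. The Poincaré inequality gives `∑_T φ² ≤ R / γ`, hence `R ≤ 2 / γ`.
Adding the new vertex can only lower the resistance (Rayleigh monotonicity), while Dirichlet's
principle for `φ` extended by `0` at the new vertex gives `R̂_{G'}(u, v) ≥ R² / (R + D)`, where
`D ≤ ∑_T φ² ≤ R / γ` is the energy of the new star. Hence the renormalized resistances differ by
at most `D ≤ 2 / γ² ≤ 8192 / (n p)²`.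
-/

section Electrical

variable {V : Type*}

def edgeWeight (G : SimpleGraph V) (a b : V) : ℝ := if G.Adj a b then 1 else 0

lemma edgeWeight_nonneg (G : SimpleGraph V) (a b : V) : 0 ≤ edgeWeight G a b := by
  unfold edgeWeight; split <;> norm_num

lemma edgeWeight_le_one (G : SimpleGraph V) (a b : V) : edgeWeight G a b ≤ 1 := by
  unfold edgeWeight; split <;> norm_num

lemma edgeWeight_comm (G : SimpleGraph V) (a b : V) : edgeWeight G a b = edgeWeight G b a := by
  simp [edgeWeight, SimpleGraph.adj_comm]

lemma edgeWeight_mul_self (G : SimpleGraph V) (a b : V) :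
    edgeWeight G a b * edgeWeight G a b = edgeWeight G a b := by
  unfold edgeWeight; split <;> norm_num

lemma edgeWeight_of_not_adj {G : SimpleGraph V} {a b : V} (h : ¬ G.Adj a b) :
    edgeWeight G a b = 0 := if_neg h

lemma edgeWeight_mono {G₁ G₂ : SimpleGraph V} (h : G₁ ≤ G₂) (a b : V) :
    edgeWeight G₁ a b ≤ edgeWeight G₂ a b := by
  unfold edgeWeight
  by_cases h₁ : G₁.Adj a b
  · simp [h₁, h h₁]
  · simp only [h₁, if_false]; split <;> norm_num

variable [Fintype V]

lemma sum_sum_mul_sq_le (f g : V → V → ℝ) :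
    (∑ a, ∑ b, f a b * g a b) ^ 2 ≤ (∑ a, ∑ b, f a b ^ 2) * ∑ a, ∑ b, g a b ^ 2 := by
  simp only [← Fintype.sum_prod_type']
  exact Finset.sum_mul_sq_le_sq_mul_sq _ _ _

def dirichlet (G : SimpleGraph V) (ψ : V → ℝ) : ℝ :=
  (1 / 2) * ∑ a, ∑ b, edgeWeight G a b * (ψ a - ψ b) ^ 2

lemma dirichlet_nonneg (G : SimpleGraph V) (ψ : V → ℝ) : 0 ≤ dirichlet G ψ :=
  mul_nonneg (by norm_num) <| Finset.sum_nonneg fun a _ => Finset.sum_nonneg fun b _ =>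
    mul_nonneg (edgeWeight_nonneg G a b) (sq_nonneg _)

lemma dirichlet_congr {G : SimpleGraph V} {ψ₁ ψ₂ : V → ℝ}
    (h : ∀ a b, G.Adj a b → ψ₁ a - ψ₁ b = ψ₂ a - ψ₂ b) : dirichlet G ψ₁ = dirichlet G ψ₂ := by
  unfold dirichlet
  congr 1
  refine Finset.sum_congr rfl fun a _ => Finset.sum_congr rfl fun b _ => ?_
  by_cases hab : G.Adj a b
  · rw [h a b hab]
  · simp [edgeWeight_of_not_adj hab]

lemma dirichlet_sub_const (G : SimpleGraph V) (ψ : V → ℝ) (c : ℝ) :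
    dirichlet G (fun x => ψ x - c) = dirichlet G ψ :=
  dirichlet_congr fun _ _ _ => by ring

lemma eq_of_adj_of_dirichlet_eq_zero {G : SimpleGraph V} {ψ : V → ℝ} (h : dirichlet G ψ = 0)
    {a b : V} (hab : G.Adj a b) : ψ a = ψ b := by
  have hnn : ∀ a b, 0 ≤ edgeWeight G a b * (ψ a - ψ b) ^ 2 := fun a b =>
    mul_nonneg (edgeWeight_nonneg G a b) (sq_nonneg _)
  have hsum : ∑ a, ∑ b, edgeWeight G a b * (ψ a - ψ b) ^ 2 = 0 := by
    unfold dirichlet at h; linarith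
  rw [Finset.sum_eq_zero_iff_of_nonneg fun a _ => Finset.sum_nonneg fun b _ => hnn a b] at hsum
  have hterm := (Finset.sum_eq_zero_iff_of_nonneg fun b _ => hnn a b).1
    (hsum a (Finset.mem_univ a)) b (Finset.mem_univ b)
  rw [edgeWeight, if_pos hab, one_mul, sq_eq_zero_iff, sub_eq_zero] at hterm
  exact hterm

lemma energy_nonneg (f : V → V → ℝ) : 0 ≤ energy f :=
  mul_nonneg (by norm_num) <| Finset.sum_nonneg fun a _ => Finset.sum_nonneg fun b _ =>
    sq_nonneg _

def laplacian (G : SimpleGraph V) : (V → ℝ) →ₗ[ℝ] (V → ℝ) where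
  toFun ψ a := ∑ b, edgeWeight G a b * (ψ a - ψ b)
  map_add' ψ φ := by
    funext a
    simp only [Pi.add_apply, ← Finset.sum_add_distrib]
    exact Finset.sum_congr rfl fun b _ => by ring
  map_smul' c ψ := by
    funext a
    simp only [Pi.smul_apply, RingHom.id_apply, smul_eq_mul, Finset.mul_sum]
    exact Finset.sum_congr rfl fun b _ => by ring

lemma laplacian_apply (G : SimpleGraph V) (ψ : V → ℝ) (a : V) :
    laplacian G ψ a = ∑ b, edgeWeight G a b * (ψ a - ψ b) := rfl

lemma sum_mul_laplacian (G : SimpleGraph V) (φ ψ : V → ℝ) :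
    ∑ a, φ a * laplacian G ψ a =
      (1 / 2) * ∑ a, ∑ b, edgeWeight G a b * (φ a - φ b) * (ψ a - ψ b) := by
  have hleft : ∑ a, φ a * laplacian G ψ a = ∑ a, ∑ b, edgeWeight G a b * φ a * (ψ a - ψ b) := by
    simp only [laplacian_apply, Finset.mul_sum]
    exact Finset.sum_congr rfl fun a _ => Finset.sum_congr rfl fun b _ => by ring
  have hswap : ∑ a, ∑ b, edgeWeight G a b * φ a * (ψ a - ψ b) =
      ∑ a, ∑ b, edgeWeight G a b * -φ b * (ψ a - ψ b) := by
    rw [Finset.sum_comm]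
    refine Finset.sum_congr rfl fun a _ => Finset.sum_congr rfl fun b _ => ?_
    rw [edgeWeight_comm]; ring
  have hsum : ∑ a, ∑ b, edgeWeight G a b * (φ a - φ b) * (ψ a - ψ b) =
      ∑ a, ∑ b, edgeWeight G a b * φ a * (ψ a - ψ b) +
        ∑ a, ∑ b, edgeWeight G a b * -φ b * (ψ a - ψ b) := by
    simp only [← Finset.sum_add_distrib]
    exact Finset.sum_congr rfl fun a _ => Finset.sum_congr rfl fun b _ => by ring
  rw [hsum, ← hswap, hleft]; ring

lemma sum_mul_laplacian_self (G : SimpleGraph V) (ψ : V → ℝ) :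
    ∑ a, ψ a * laplacian G ψ a = dirichlet G ψ := by
  rw [sum_mul_laplacian, dirichlet]
  congr 1
  exact Finset.sum_congr rfl fun a _ => Finset.sum_congr rfl fun b _ => by ring

lemma sum_mul_laplacian_comm (G : SimpleGraph V) (φ ψ : V → ℝ) :
    ∑ a, φ a * laplacian G ψ a = ∑ a, ψ a * laplacian G φ a := by
  rw [sum_mul_laplacian, sum_mul_laplacian]
  congr 1
  exact Finset.sum_congr rfl fun a _ => Finset.sum_congr rfl fun b _ => by ring

lemma sum_mul_single_sub_single (k : V → ℝ) (u v : V) :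
    ∑ a, k a * (Pi.single u 1 - Pi.single v 1 : V → ℝ) a = k u - k v := by
  simp [mul_sub, Finset.sum_sub_distrib, Pi.single_apply]

lemma IsUnitFlow.sum_sum_mul_sub {G : SimpleGraph V} {u v : V} {f : V → V → ℝ}
    (hf : IsUnitFlow G u v f) (ψ : V → ℝ) :
    ∑ a, ∑ b, f a b * (ψ a - ψ b) = 2 * (ψ u - ψ v) := by
  obtain ⟨hanti, -, hdiv⟩ := hf
  have hdiv' : ∀ a, ∑ b, f a b = (Pi.single u 1 - Pi.single v 1 : V → ℝ) a := fun a => by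
    simp [hdiv a, Pi.single_apply]
  have hout : ∑ a, ∑ b, f a b * ψ a = ψ u - ψ v := by
    rw [← sum_mul_single_sub_single ψ]
    exact Finset.sum_congr rfl fun a _ => by rw [← Finset.sum_mul, hdiv', mul_comm]
  have hin : ∑ a, ∑ b, f a b * ψ b = -(ψ u - ψ v) := by
    rw [Finset.sum_comm, ← sum_mul_single_sub_single ψ, ← Finset.sum_neg_distrib]
    refine Finset.sum_congr rfl fun a _ => ?_
    simp_rw [← Finset.sum_mul, hanti _ a, Finset.sum_neg_distrib, hdiv']
    ring
  simp only [mul_sub, Finset.sum_sub_distrib, hout, hin]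
  ring

/-- Pair the flow with the potential differences, then apply Cauchy–Schwarz. -/
lemma IsUnitFlow.sq_sub_le_energy_mul_dirichlet {G : SimpleGraph V} {u v : V}
    {f : V → V → ℝ} (hf : IsUnitFlow G u v f) (ψ : V → ℝ) :
    (ψ u - ψ v) ^ 2 ≤ energy f * dirichlet G ψ := by
  have hpair : ∑ a, ∑ b, f a b * (edgeWeight G a b * (ψ a - ψ b)) = 2 * (ψ u - ψ v) := by
    rw [← hf.sum_sum_mul_sub ψ]
    refine Finset.sum_congr rfl fun a _ => Finset.sum_congr rfl fun b _ => ?_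
    by_cases hab : G.Adj a b
    · simp [edgeWeight, hab]
    · simp [hf.2.1 a b hab]
  have hcs := sum_sum_mul_sq_le f fun a b => edgeWeight G a b * (ψ a - ψ b)
  simp only [mul_pow, sq (edgeWeight G _ _), edgeWeight_mul_self] at hcs
  rw [hpair] at hcs
  unfold energy dirichlet
  nlinarith

lemma effRes_le_ofReal_energy {G : SimpleGraph V} {u v : V} {f : V → V → ℝ}
    (hf : IsUnitFlow G u v f) : effRes G u v ≤ ENNReal.ofReal (energy f) :=
  sInf_le ⟨f, hf, rfl⟩

lemma ofReal_sq_sub_div_dirichlet_le_effRes (G : SimpleGraph V) (u v : V) (ψ : V → ℝ)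
    (hψ : 0 < dirichlet G ψ) :
    ENNReal.ofReal ((ψ u - ψ v) ^ 2 / dirichlet G ψ) ≤ effRes G u v := by
  refine le_sInf ?_
  rintro x ⟨f, hf, rfl⟩
  rw [ENNReal.ofReal_le_ofReal_iff (energy_nonneg f), div_le_iff₀ hψ]
  exact hf.sq_sub_le_energy_mul_dirichlet ψ

lemma effRes_anti {G₁ G₂ : SimpleGraph V} (h : G₁ ≤ G₂) (u v : V) :
    effRes G₂ u v ≤ effRes G₁ u v := by
  refine sInf_le_sInf ?_
  rintro x ⟨f, ⟨hanti, hsupp, hdiv⟩, rfl⟩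
  exact ⟨f, ⟨hanti, fun a b hab => hsupp a b fun h' => hab (h h'), hdiv⟩, rfl⟩

/-- A symmetric operator on a finite-dimensional space has range complementary to its kernel;
if every kernel vector takes equal values at `u` and `v`, then `1_u - 1_v` is orthogonal to the
kernel and hence lies in the range. -/
lemma exists_laplacian_eq_single_sub_single (G : SimpleGraph V) {u v : V}
    (hker : ∀ k, laplacian G k = 0 → k u = k v) :
    ∃ φ, laplacian G φ = Pi.single u 1 - Pi.single v 1 := by
  set L := laplacian G
  have hsymm : ∀ x y : V → ℝ, ∑ a, x a * L y a = ∑ a, y a * L x a := sum_mul_laplacian_comm G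
  have eq_zero_of_sum_mul_self : ∀ x : V → ℝ, ∑ a, x a * x a = 0 → x = 0 := fun x hx => by
    funext a
    simpa using (Finset.sum_eq_zero_iff_of_nonneg fun a _ => mul_self_nonneg (x a)).1 hx a
      (Finset.mem_univ a)
  have hdisj : LinearMap.range L ⊓ LinearMap.ker L = ⊥ := by
    rw [Submodule.eq_bot_iff]
    rintro _ ⟨⟨y, rfl⟩, hk⟩
    refine eq_zero_of_sum_mul_self _ ?_
    rw [hsymm, LinearMap.mem_ker.1 hk]
    simp
  have hcodisj : LinearMap.range L ⊔ LinearMap.ker L = ⊤ := by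
    refine Submodule.eq_top_of_finrank_eq ?_
    have h := Submodule.finrank_sup_add_finrank_inf_eq (LinearMap.range L) (LinearMap.ker L)
    rw [hdisj, finrank_bot, add_zero] at h
    rw [h, LinearMap.finrank_range_add_finrank_ker]
  obtain ⟨_, ⟨y, rfl⟩, k, hk, hyk⟩ :=
    Submodule.mem_sup.1 (hcodisj ▸ Submodule.mem_top : Pi.single u 1 - Pi.single v 1 ∈ _)
  have hk0 : k = 0 := by
    refine eq_zero_of_sum_mul_self _ ?_
    have hk' : ∀ a, k a = (Pi.single u 1 - Pi.single v 1 : V → ℝ) a - L y a := fun a => by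
      rw [← hyk, Pi.add_apply]; ring
    calc ∑ a, k a * k a
        = ∑ a, k a * (Pi.single u 1 - Pi.single v 1 : V → ℝ) a - ∑ a, k a * L y a := by
          rw [← Finset.sum_sub_distrib]
          exact Finset.sum_congr rfl fun a _ => by rw [← mul_sub, ← hk' a]
      _ = 0 := by
          rw [sum_mul_single_sub_single, hker k hk, hsymm, hk]
          simp
  exact ⟨y, by rw [← hyk, hk0, add_zero]⟩

/-- The potential `φ` solving `Lφ = 1_u - 1_v` induces the current `f a b = w(a,b)(φ a - φ b)`,
whose energy equals the lower bound `(φ u - φ v)² / E(φ)` given by `φ` itself. -/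
lemma effRes_eq_of_laplacian_eq {G : SimpleGraph V} {u v : V} (huv : u ≠ v) {φ : V → ℝ}
    (hφ : laplacian G φ = Pi.single u 1 - Pi.single v 1) :
    0 < φ u - φ v ∧ dirichlet G φ = φ u - φ v ∧ effRes G u v = ENNReal.ofReal (φ u - φ v) := by
  have hE : dirichlet G φ = φ u - φ v := by
    rw [← sum_mul_laplacian_self, hφ, sum_mul_single_sub_single]
  have hpos : 0 < φ u - φ v := by
    refine hE ▸ (dirichlet_nonneg G φ).lt_of_ne fun h0 => ?_
    have hu := congrFun hφ u
    rw [laplacian_apply, Finset.sum_eq_zero fun b _ => ?_] at hu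
    · simp [huv] at hu
    by_cases hb : G.Adj u b
    · rw [eq_of_adj_of_dirichlet_eq_zero h0.symm hb, sub_self, mul_zero]
    · rw [edgeWeight_of_not_adj hb, zero_mul]
  have hflow : IsUnitFlow G u v fun a b => edgeWeight G a b * (φ a - φ b) := by
    refine ⟨fun a b => by beta_reduce; rw [edgeWeight_comm]; ring, fun a b hab => by
      beta_reduce; rw [edgeWeight_of_not_adj hab, zero_mul], fun w => ?_⟩
    have hw := congrFun hφ w
    rw [laplacian_apply] at hw
    simp [hw, Pi.single_apply]
  have henergy : energy (fun a b => edgeWeight G a b * (φ a - φ b)) = dirichlet G φ := by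
    unfold energy dirichlet
    simp only [mul_pow, sq (edgeWeight G _ _), edgeWeight_mul_self]
  refine ⟨hpos, hE, le_antisymm ?_ ?_⟩
  · simpa only [henergy, hE] using effRes_le_ofReal_energy hflow
  · have h := ofReal_sq_sub_div_dirichlet_le_effRes G u v φ (hE ▸ hpos)
    rwa [hE, sq, mul_div_assoc, div_self hpos.ne', mul_one] at h

lemma renRes_eq_of_effRes_eq {G : SimpleGraph V} {u v : V} {R : ℝ} (hR : 0 ≤ R)
    (h : effRes G u v = ENNReal.ofReal R) : renRes G u v = R / (R + 1) := by
  rw [renRes, if_neg (h ▸ ENNReal.ofReal_ne_top), h, ENNReal.toReal_ofReal hR]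

end Electrical

section Cheeger

variable {V : Type*}

def cutWeight (G : SimpleGraph V) (S S' : Finset V) : ℝ := ∑ a ∈ S, ∑ b ∈ S', edgeWeight G a b

def HasCutExpansion [DecidableEq V] (G : SimpleGraph V) (T : Finset V) (h : ℝ) : Prop :=
  ∀ S ⊆ T, S.Nonempty → 2 * S.card ≤ T.card → h * S.card ≤ cutWeight G S (T \ S)

lemma mem_of_adj_of_support_subset {G : SimpleGraph V} {T : Finset V} (hT : G.support ⊆ T)
    {a b : V} (hab : G.Adj a b) : a ∈ T ∧ b ∈ T :=
  ⟨hT ⟨b, hab⟩, hT ⟨a, hab.symm⟩⟩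

lemma exists_median (T : Finset V) (hT : T.Nonempty) (f : V → ℝ) :
    ∃ m, 2 * (T.filter (m < f ·)).card ≤ T.card ∧ 2 * (T.filter (f · < m)).card ≤ T.card := by
  set M := (T.image f).filter fun y => 2 * (T.filter (f · < y)).card ≤ T.card
  have hM : M.Nonempty := by
    obtain ⟨v, hv, hmin⟩ := T.exists_min_image f hT
    refine ⟨f v, Finset.mem_filter.2 ⟨Finset.mem_image_of_mem f hv, ?_⟩⟩
    rw [Finset.filter_false_of_mem fun w hw => not_lt.2 (hmin w hw)]
    simp
  set m := M.max' hM
  obtain ⟨-, hm⟩ := Finset.mem_filter.1 (M.max'_mem hM)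
  refine ⟨m, ?_, hm⟩
  by_contra! hA
  set A := T.filter (m < f ·)
  have hAT : A.card ≤ T.card := Finset.card_le_card (Finset.filter_subset _ _)
  obtain ⟨w, hwA, hwmin⟩ := A.exists_min_image f (Finset.card_pos.1 (by omega))
  obtain ⟨hwT, hmw⟩ := Finset.mem_filter.1 hwA
  have hlow : T.filter (f · < f w) ⊆ T \ A := fun v hv => by
    obtain ⟨hvT, hvw⟩ := Finset.mem_filter.1 hv
    exact Finset.mem_sdiff.2 ⟨hvT, fun hvA => (hwmin v hvA).not_gt hvw⟩
  have hlow' : (T.filter (f · < f w)).card ≤ T.card - A.card :=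
    (Finset.card_le_card hlow).trans_eq (Finset.card_sdiff_of_subset (Finset.filter_subset _ _))
  have hwM : f w ∈ M := Finset.mem_filter.2 ⟨Finset.mem_image_of_mem f hwT, by omega⟩
  exact (M.le_max' _ hwM).not_gt hmw

lemma sum_sq_le_sum_sub_sq {T : Finset V} {f : V → ℝ} (hf : ∑ v ∈ T, f v = 0) (m : ℝ) :
    ∑ v ∈ T, f v ^ 2 ≤ ∑ v ∈ T, (f v - m) ^ 2 := by
  have hexpand : ∑ v ∈ T, (f v - m) ^ 2 =
      ∑ v ∈ T, f v ^ 2 - 2 * m * ∑ v ∈ T, f v + T.card * m ^ 2 := by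
    rw [Finset.mul_sum, ← nsmul_eq_mul, ← Finset.sum_const, ← Finset.sum_sub_distrib,
      ← Finset.sum_add_distrib]
    exact Finset.sum_congr rfl fun v _ => by ring
  rw [hexpand, hf]
  nlinarith [sq_nonneg m, (T.card.cast_nonneg : (0 : ℝ) ≤ T.card)]

variable [Fintype V]

/-- Poincaré inequality on `T` with constant `gap`: a lower bound on the spectral gap of the
Laplacian restricted to `T`. -/
def HasSpectralGap (G : SimpleGraph V) (T : Finset V) (gap : ℝ) : Prop :=
  ∀ f : V → ℝ, ∑ v ∈ T, f v = 0 → gap * ∑ v ∈ T, f v ^ 2 ≤ dirichlet G f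

lemma sum_sum_edgeWeight_mul_abs_nonneg (G : SimpleGraph V) (x : V → ℝ) :
    0 ≤ ∑ a, ∑ b, edgeWeight G a b * |x a - x b| :=
  Finset.sum_nonneg fun a _ => Finset.sum_nonneg fun b _ =>
    mul_nonneg (edgeWeight_nonneg G a b) (abs_nonneg _)

lemma cutWeight_eq_sum_sum_ite [DecidableEq V] (G : SimpleGraph V) (S S' : Finset V) :
    cutWeight G S S' = ∑ a, ∑ b, if a ∈ S ∧ b ∈ S' then edgeWeight G a b else 0 := by
  simp [cutWeight, ite_and]

lemma sum_sum_edgeWeight_mul_abs_indicator_sub [DecidableEq V] {G : SimpleGraph V} {T S : Finset V}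
    (hT : G.support ⊆ T) :
    ∑ a, ∑ b, edgeWeight G a b * |(if a ∈ S then (1 : ℝ) else 0) - if b ∈ S then 1 else 0| =
      2 * cutWeight G S (T \ S) := by
  have hsplit : ∀ a b, edgeWeight G a b * |(if a ∈ S then (1 : ℝ) else 0) - if b ∈ S then 1 else 0|
      = (if a ∈ S ∧ b ∈ T \ S then edgeWeight G a b else 0) +
        if b ∈ S ∧ a ∈ T \ S then edgeWeight G b a else 0 := by
    intro a b
    by_cases hab : G.Adj a b
    · obtain ⟨ha, hb⟩ := mem_of_adj_of_support_subset hT hab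
      rw [edgeWeight_comm G b a]
      by_cases haS : a ∈ S <;> by_cases hbS : b ∈ S <;> simp [haS, hbS, ha, hb]
    · simp [edgeWeight_of_not_adj hab, edgeWeight_of_not_adj fun h => hab h.symm]
  simp only [hsplit, Finset.sum_add_distrib]
  rw [Finset.sum_comm (f := fun a b => if b ∈ S ∧ a ∈ T \ S then edgeWeight G b a else 0),
    ← cutWeight_eq_sum_sum_ite]
  ring

lemma abs_sub_eq_mul_abs_sub_add {x y c : ℝ} {p q : Prop} [Decidable p] [Decidable q]
    (hc : 0 ≤ c) (hxp : p → c ≤ x) (hx : ¬p → x = 0) (hyq : q → c ≤ y) (hy : ¬q → y = 0) :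
    |x - y| = c * |(if p then (1 : ℝ) else 0) - if q then 1 else 0| +
      |(if p then x - c else 0) - if q then y - c else 0| := by
  by_cases hp : p <;> by_cases hq : q <;> simp only [hp, hq, if_true, if_false]
  · rw [sub_sub_sub_cancel_right]; ring
  · rw [hy hq, sub_zero, sub_zero, sub_zero, abs_one, abs_of_nonneg (by linarith [hxp hp]),
      abs_of_nonneg (by linarith [hxp hp])]
    ring
  · rw [hx hp, zero_sub, zero_sub, zero_sub, abs_neg, abs_neg, abs_neg, abs_one,
      abs_of_nonneg (by linarith [hyq hq]), abs_of_nonneg (by linarith [hyq hq])]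
    ring
  · simp [hx hp, hy hq]

lemma sum_sum_edgeWeight_mul_abs_sub_eq [DecidableEq V] {G : SimpleGraph V} {T S : Finset V}
    (hT : G.support ⊆ T) {x : V → ℝ} {c : ℝ} (hc : 0 ≤ c) (hmin : ∀ v ∈ S, c ≤ x v)
    (hzero : ∀ v ∈ T, v ∉ S → x v = 0) :
    ∑ a, ∑ b, edgeWeight G a b * |x a - x b| = 2 * c * cutWeight G S (T \ S) +
      ∑ a, ∑ b, edgeWeight G a b *
        |(if a ∈ S then x a - c else 0) - if b ∈ S then x b - c else 0| := by
  have hpt : ∀ a b, edgeWeight G a b * |x a - x b| =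
      c * (edgeWeight G a b * |(if a ∈ S then (1 : ℝ) else 0) - if b ∈ S then 1 else 0|) +
        edgeWeight G a b * |(if a ∈ S then x a - c else 0) - if b ∈ S then x b - c else 0| :=
    fun a b => by
      by_cases hab : G.Adj a b
      · obtain ⟨ha, hb⟩ := mem_of_adj_of_support_subset hT hab
        rw [abs_sub_eq_mul_abs_sub_add hc (hmin a) (hzero a ha) (hmin b) (hzero b hb)]
        ring
      · simp [edgeWeight_of_not_adj hab]
  simp only [hpt, Finset.sum_add_distrib, ← Finset.mul_sum,
    sum_sum_edgeWeight_mul_abs_indicator_sub hT]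
  ring

/-- Coarea inequality, by peeling off the lowest level set: with `c` the least nonzero value
of `x`, the function `x - c·1_S` has strictly smaller support `S`. -/
lemma HasCutExpansion.mul_sum_le [DecidableEq V] {G : SimpleGraph V} {T : Finset V} {h : ℝ}
    (hexp : HasCutExpansion G T h) (hT : G.support ⊆ T) (x : V → ℝ) (hx : ∀ v, 0 ≤ x v)
    (hsupp : 2 * (T.filter (x · ≠ 0)).card ≤ T.card) :
    h * ∑ v ∈ T, x v ≤ (1 / 2) * ∑ a, ∑ b, edgeWeight G a b * |x a - x b| := by
  induction hk : (T.filter (x · ≠ 0)).card using Nat.strong_induction_on generalizing x with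
  | _ k ih =>
  set S := T.filter (x · ≠ 0)
  have hzero : ∀ v ∈ T, v ∉ S → x v = 0 := fun v hv hvS => by
    by_contra hne; exact hvS (Finset.mem_filter.2 ⟨hv, hne⟩)
  rcases S.eq_empty_or_nonempty with hS | hS
  · rw [Finset.sum_eq_zero fun v hv => hzero v hv (hS ▸ Finset.notMem_empty v), mul_zero]
    exact mul_nonneg (by norm_num) (sum_sum_edgeWeight_mul_abs_nonneg G x)
  obtain ⟨v₀, hv₀, hmin⟩ := S.exists_min_image x hS
  set c := x v₀
  have hc : 0 ≤ c := hx v₀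
  set x' : V → ℝ := fun v => if v ∈ S then x v - c else 0
  have hx' : ∀ v, 0 ≤ x' v := fun v => by
    by_cases hv : v ∈ S
    · simpa [x', hv] using hmin v hv
    · simp [x', hv]
  have hsupp' : T.filter (x' · ≠ 0) ⊆ S.erase v₀ := fun v hv => by
    by_cases hvS : v ∈ S
    · refine Finset.mem_erase.2 ⟨fun h => ?_, hvS⟩
      subst h
      simp [x', hvS, c] at hv
    · simp [x', hvS] at hv
  have hsum : ∑ v ∈ T, x v = c * S.card + ∑ v ∈ T, x' v := by
    have hpt : ∀ v ∈ T, x v = (if v ∈ S then c else 0) + x' v := fun v hv => by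
      by_cases hvS : v ∈ S
      · simp [x', hvS]
      · simp [x', hvS, hzero v hv hvS]
    rw [Finset.sum_congr rfl hpt, Finset.sum_add_distrib, Finset.sum_ite_mem,
      Finset.inter_eq_right.2 (Finset.filter_subset _ _), Finset.sum_const, nsmul_eq_mul, mul_comm]
  have henergy := sum_sum_edgeWeight_mul_abs_sub_eq hT hc hmin hzero
  have hcard' : (T.filter (x' · ≠ 0)).card < k := by
    calc _ ≤ (S.erase v₀).card := Finset.card_le_card hsupp'
      _ < S.card := Finset.card_erase_lt_of_mem hv₀
      _ = k := hk
  have hind := ih _ hcard' x' hx' (by omega) rfl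
  have hcut := hexp S (Finset.filter_subset _ _) hS hsupp
  rw [hsum, henergy]
  nlinarith [mul_le_mul_of_nonneg_left hcut hc]


lemma sum_sum_edgeWeight_mul_add_sq_le {G : SimpleGraph V} {T : Finset V} (hT : G.support ⊆ T)
    {d : ℝ} (hdeg : ∀ a, ∑ b, edgeWeight G a b ≤ d) (g : V → ℝ) :
    ∑ a, ∑ b, edgeWeight G a b * (g a + g b) ^ 2 ≤ 4 * d * ∑ v ∈ T, g v ^ 2 := by
  have hdeg_out : ∀ a ∉ T, ∑ b, edgeWeight G a b = 0 := fun a ha =>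
    Finset.sum_eq_zero fun b _ => edgeWeight_of_not_adj fun hab =>
      ha (mem_of_adj_of_support_subset hT hab).1
  have hswap : ∑ a, ∑ b, edgeWeight G a b * g b ^ 2 = ∑ a, ∑ b, edgeWeight G a b * g a ^ 2 := by
    rw [Finset.sum_comm]
    exact Finset.sum_congr rfl fun a _ => Finset.sum_congr rfl fun b _ => by rw [edgeWeight_comm]
  calc ∑ a, ∑ b, edgeWeight G a b * (g a + g b) ^ 2
      ≤ ∑ a, ∑ b, edgeWeight G a b * (2 * g a ^ 2 + 2 * g b ^ 2) :=
        Finset.sum_le_sum fun a _ => Finset.sum_le_sum fun b _ =>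
          mul_le_mul_of_nonneg_left (by nlinarith [sq_nonneg (g a - g b)])
            (edgeWeight_nonneg G a b)
    _ = 2 * ∑ a, ∑ b, edgeWeight G a b * g a ^ 2 + 2 * ∑ a, ∑ b, edgeWeight G a b * g b ^ 2 := by
        simp only [Finset.mul_sum, ← Finset.sum_add_distrib]
        exact Finset.sum_congr rfl fun a _ => Finset.sum_congr rfl fun b _ => by ring
    _ = 4 * ∑ a, (∑ b, edgeWeight G a b) * g a ^ 2 := by
        rw [hswap]; simp only [Finset.sum_mul]; ring
    _ = 4 * ∑ a ∈ T, (∑ b, edgeWeight G a b) * g a ^ 2 := by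
        rw [← Finset.sum_subset (Finset.subset_univ T) fun a _ ha => by
          rw [hdeg_out a ha, zero_mul]]
    _ ≤ 4 * d * ∑ v ∈ T, g v ^ 2 := by
        rw [mul_assoc]
        exact mul_le_mul_of_nonneg_left ((Finset.sum_le_sum fun a _ =>
          mul_le_mul_of_nonneg_right (hdeg a) (sq_nonneg _)).trans_eq (Finset.mul_sum ..).symm)
          (by norm_num)

/-- The coarea inequality applied to `g²`, with `|g a² - g b²| = |g a - g b|·|g a + g b|` and
Cauchy–Schwarz. -/
lemma HasCutExpansion.mul_sum_sq_le_dirichlet [DecidableEq V] {G : SimpleGraph V} {T : Finset V}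
    {h d : ℝ} (hexp : HasCutExpansion G T h) (hT : G.support ⊆ T) (hh : 0 ≤ h) (hd : 0 < d)
    (hdeg : ∀ a, ∑ b, edgeWeight G a b ≤ d) (g : V → ℝ)
    (hsupp : 2 * (T.filter (g · ≠ 0)).card ≤ T.card) :
    h ^ 2 / (2 * d) * ∑ v ∈ T, g v ^ 2 ≤ dirichlet G g := by
  set S := ∑ v ∈ T, g v ^ 2
  set W := ∑ a, ∑ b, edgeWeight G a b * |g a ^ 2 - g b ^ 2|
  have hcoarea : h * S ≤ (1 / 2) * W := by
    refine hexp.mul_sum_le hT (g · ^ 2) (fun v => sq_nonneg _) ?_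
    simpa only [ne_eq, pow_eq_zero_iff two_ne_zero] using hsupp
  have hW : W = ∑ a, ∑ b, (edgeWeight G a b * |g a - g b|) * (edgeWeight G a b * |g a + g b|) := by
    refine Finset.sum_congr rfl fun a _ => Finset.sum_congr rfl fun b _ => ?_
    rw [mul_mul_mul_comm, edgeWeight_mul_self, ← abs_mul, sq_sub_sq, mul_comm (g a + g b)]
  have hcs : W ^ 2 ≤ (2 * dirichlet G g) * (4 * d * S) := by
    rw [hW]
    refine (sum_sum_mul_sq_le _ _).trans (mul_le_mul ?_ ?_ ?_ ?_)
    · simp only [mul_pow, sq (edgeWeight G _ _), edgeWeight_mul_self, sq_abs, dirichlet]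
      ring_nf; rfl
    · simpa only [mul_pow, sq (edgeWeight G _ _), edgeWeight_mul_self, sq_abs]
        using sum_sum_edgeWeight_mul_add_sq_le hT hdeg g
    · exact Finset.sum_nonneg fun a _ => Finset.sum_nonneg fun b _ => sq_nonneg _
    · linarith [dirichlet_nonneg G g]
  have hS : 0 ≤ S := Finset.sum_nonneg fun v _ => sq_nonneg _
  rcases hS.eq_or_lt with hS0 | hSpos
  · rw [← hS0, mul_zero]; exact dirichlet_nonneg G g
  have hsq : (h * S) ^ 2 ≤ ((1 / 2) * W) ^ 2 := pow_le_pow_left₀ (by positivity) hcoarea 2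
  rw [div_mul_eq_mul_div, div_le_iff₀ (by positivity)]
  nlinarith

lemma max_sub_max_sq_add_le (X Y : ℝ) :
    (max X 0 - max Y 0) ^ 2 + (max (-X) 0 - max (-Y) 0) ^ 2 ≤ (X - Y) ^ 2 := by
  rcases le_total X 0 with hX | hX <;> rcases le_total Y 0 with hY | hY <;>
    simp only [max_eq_left, max_eq_right, hX, hY, neg_nonneg, neg_nonpos] <;> nlinarith

lemma sq_max_add_sq_max_neg (X : ℝ) : max X 0 ^ 2 + max (-X) 0 ^ 2 = X ^ 2 := by
  rcases le_total X 0 with hX | hX <;>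
    simp only [max_eq_left, max_eq_right, hX, neg_nonneg, neg_nonpos] <;> ring

/-- Cheeger's inequality: split `f` at a median into its positive and negative parts, each
supported on at most half of `T`. -/
lemma HasCutExpansion.hasSpectralGap [DecidableEq V] {G : SimpleGraph V} {T : Finset V} {h d : ℝ}
    (hexp : HasCutExpansion G T h) (hT : G.support ⊆ T) (hh : 0 ≤ h) (hd : 0 < d)
    (hdeg : ∀ a, ∑ b, edgeWeight G a b ≤ d) : HasSpectralGap G T (h ^ 2 / (2 * d)) := by
  intro f hf
  rcases T.eq_empty_or_nonempty with rfl | hTne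
  · simpa using dirichlet_nonneg G f
  obtain ⟨m, hm₁, hm₂⟩ := exists_median T hTne f
  set gp : V → ℝ := fun v => max (f v - m) 0
  set gm : V → ℝ := fun v => max (-(f v - m)) 0
  have hgp := hexp.mul_sum_sq_le_dirichlet hT hh hd hdeg gp
    (by convert hm₁ using 4; simp [gp])
  have hgm := hexp.mul_sum_sq_le_dirichlet hT hh hd hdeg gm
    (by convert hm₂ using 4; simp [gm])
  have hsplit : dirichlet G gp + dirichlet G gm ≤ dirichlet G f := by
    simp only [dirichlet, ← mul_add, ← Finset.sum_add_distrib]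
    refine mul_le_mul_of_nonneg_left (Finset.sum_le_sum fun a _ => Finset.sum_le_sum fun b _ => ?_)
      (by norm_num)
    have key := max_sub_max_sq_add_le (f a - m) (f b - m)
    calc _ = edgeWeight G a b * ((gp a - gp b) ^ 2 + (gm a - gm b) ^ 2) := by ring
      _ ≤ edgeWeight G a b * (f a - f b) ^ 2 :=
        mul_le_mul_of_nonneg_left (by simpa [gp, gm] using key) (edgeWeight_nonneg G a b)
  have hsq : ∑ v ∈ T, (gp v ^ 2 + gm v ^ 2) = ∑ v ∈ T, (f v - m) ^ 2 :=
    Finset.sum_congr rfl fun v _ => sq_max_add_sq_max_neg _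
  calc h ^ 2 / (2 * d) * ∑ v ∈ T, f v ^ 2
      ≤ h ^ 2 / (2 * d) * ∑ v ∈ T, (gp v ^ 2 + gm v ^ 2) := by
        rw [hsq]
        exact mul_le_mul_of_nonneg_left (sum_sq_le_sum_sub_sq hf m) (by positivity)
    _ = h ^ 2 / (2 * d) * ∑ v ∈ T, gp v ^ 2 + h ^ 2 / (2 * d) * ∑ v ∈ T, gm v ^ 2 := by
        rw [Finset.sum_add_distrib, mul_add]
    _ ≤ dirichlet G f := by linarith

end Cheeger

section Perturbation

lemma abs_div_add_one_sub_div_add_one_le {R₁ R₂ D : ℝ} (hR₁ : 0 ≤ R₁) (hR₂ : 0 < R₂)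
    (hD : 0 ≤ D) (hlow : R₂ ^ 2 / (R₂ + D) ≤ R₁) (hup : R₁ ≤ R₂) :
    |R₁ / (R₁ + 1) - R₂ / (R₂ + 1)| ≤ D := by
  have hdiff : R₂ / (R₂ + 1) - R₁ / (R₁ + 1) = (R₂ - R₁) / ((R₁ + 1) * (R₂ + 1)) := by
    field_simp; ring
  have hgap : R₂ - R₁ ≤ R₂ * D / (R₂ + D) := by
    have : R₂ * D / (R₂ + D) = R₂ - R₂ ^ 2 / (R₂ + D) := by field_simp; ring
    linarith
  rw [abs_sub_comm, abs_of_nonneg (hdiff ▸ by positivity), hdiff]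
  calc (R₂ - R₁) / ((R₁ + 1) * (R₂ + 1)) ≤ R₂ - R₁ :=
        div_le_self (by linarith) (by nlinarith)
    _ ≤ R₂ * D / (R₂ + D) := hgap
    _ ≤ D := by rw [div_le_iff₀ (by linarith)]; nlinarith

variable {V : Type*}

lemma sq_sub_le_two_mul_sum_sq {T : Finset V} {u v : V} (hu : u ∈ T) (hv : v ∈ T) (huv : u ≠ v)
    (ψ : V → ℝ) : (ψ u - ψ v) ^ 2 ≤ 2 * ∑ x ∈ T, ψ x ^ 2 := by
  have hpair := Finset.sum_le_sum_of_subset_of_nonneg (f := fun x => ψ x ^ 2)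
    (Finset.insert_subset hu (Finset.singleton_subset_iff.2 hv)) fun x _ _ => sq_nonneg _
  rw [Finset.sum_pair huv] at hpair
  nlinarith [sq_nonneg (ψ u + ψ v)]

lemma sum_sub_sum_div_card {T : Finset V} (hT : T.Nonempty) (k : V → ℝ) :
    ∑ x ∈ T, (k x - (∑ y ∈ T, k y) / T.card) = 0 := by
  have hTpos : (0 : ℝ) < T.card := Nat.cast_pos.2 (Finset.card_pos.2 hT)
  rw [Finset.sum_sub_distrib, Finset.sum_const, nsmul_eq_mul]
  field_simp
  ring

variable [Fintype V]

/-- Rayleigh monotonicity bounds `R̂` in `G₂ ⊇ G₁` from above, Dirichlet's principle with the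
potential `ψ` from below. -/
lemma abs_renRes_sub_le_of_le {G₁ G₂ : SimpleGraph V} (hG : G₁ ≤ G₂) {u v : V} {R D : ℝ}
    (hR : 0 < R) (hD : 0 ≤ D) (heff : effRes G₁ u v = ENNReal.ofReal R) (ψ : V → ℝ)
    (hψ : ψ u - ψ v = R) (hE : dirichlet G₂ ψ = R + D) :
    |renRes G₂ u v - renRes G₁ u v| ≤ D := by
  have hup : effRes G₂ u v ≤ ENNReal.ofReal R := heff ▸ effRes_anti hG u v
  have hlow := ofReal_sq_sub_div_dirichlet_le_effRes G₂ u v ψ (by linarith)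
  rw [hψ, hE] at hlow
  have hfin : effRes G₂ u v = ENNReal.ofReal (effRes G₂ u v).toReal :=
    (ENNReal.ofReal_toReal (ne_top_of_le_ne_top ENNReal.ofReal_ne_top hup)).symm
  rw [renRes_eq_of_effRes_eq ENNReal.toReal_nonneg hfin, renRes_eq_of_effRes_eq hR.le heff]
  rw [hfin] at hup hlow
  exact abs_div_add_one_sub_div_add_one_le ENNReal.toReal_nonneg hR hD
    ((ENNReal.ofReal_le_ofReal_iff ENNReal.toReal_nonneg).1 hlow)
    ((ENNReal.ofReal_le_ofReal_iff hR.le).1 hup)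

lemma HasSpectralGap.eq_of_laplacian_eq_zero {G : SimpleGraph V} {T : Finset V} {gap : ℝ}
    (hP : HasSpectralGap G T gap) (hgap : 0 < gap) {u v : V} (hu : u ∈ T) (hv : v ∈ T)
    {k : V → ℝ} (hk : laplacian G k = 0) : k u = k v := by
  set m := (∑ y ∈ T, k y) / T.card
  have hE : dirichlet G (fun x => k x - m) = 0 := by
    rw [dirichlet_sub_const, ← sum_mul_laplacian_self, hk]
    simp
  have hsum : ∑ x ∈ T, (k x - m) = 0 := sum_sub_sum_div_card ⟨u, hu⟩ k
  have hsq : ∑ x ∈ T, (k x - m) ^ 2 = 0 := by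
    have := hP _ hsum
    rw [hE] at this
    exact le_antisymm (nonpos_of_mul_nonpos_right this hgap)
      (Finset.sum_nonneg fun x _ => sq_nonneg _)
  rw [Finset.sum_eq_zero_iff_of_nonneg fun x _ => sq_nonneg _] at hsq
  have hu' := hsq u hu
  have hv' := hsq v hv
  rw [sq_eq_zero_iff, sub_eq_zero] at hu' hv'
  rw [hu', hv']

/-- The equilibrium potential, shifted to mean zero on `T` and cut off outside `T`: all edges lie
in `T`, so neither the energy nor `φ u - φ v` changes. -/
lemma exists_centered_potential {G : SimpleGraph V} {T : Finset V} (hT : G.support ⊆ T)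
    {u v : V} (hu : u ∈ T) (hv : v ∈ T) (huv : u ≠ v)
    (hker : ∀ k, laplacian G k = 0 → k u = k v) :
    ∃ ψ : V → ℝ, (∀ x ∉ T, ψ x = 0) ∧ ∑ x ∈ T, ψ x = 0 ∧ 0 < ψ u - ψ v ∧
      dirichlet G ψ = ψ u - ψ v ∧ effRes G u v = ENNReal.ofReal (ψ u - ψ v) := by
  obtain ⟨φ, hφ⟩ := exists_laplacian_eq_single_sub_single G hker
  obtain ⟨hpos, hE, heff⟩ := effRes_eq_of_laplacian_eq huv hφ
  set m := (∑ y ∈ T, φ y) / T.card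
  have hdiff : (if u ∈ T then φ u - m else 0) - (if v ∈ T then φ v - m else 0) = φ u - φ v := by
    simp [hu, hv]
  refine ⟨fun x => if x ∈ T then φ x - m else 0, fun x hx => if_neg hx, ?_, ?_, ?_, ?_⟩
  · rw [Finset.sum_ite_of_true fun x hx => hx]
    exact sum_sub_sum_div_card ⟨u, hu⟩ φ
  all_goals rw [hdiff]
  · exact hpos
  · rw [← hE, ← dirichlet_sub_const G φ m]
    refine dirichlet_congr fun a b hab => ?_
    obtain ⟨ha, hb⟩ := mem_of_adj_of_support_subset hT hab
    simp [ha, hb]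
  · exact heff

end Perturbation

section DropLast

variable {n : ℕ}

lemma dropLast_le (G : SimpleGraph (Fin (n + 1))) : dropLast G ≤ G := fun _ _ h => h.1

lemma support_dropLast_subset (G : SimpleGraph (Fin (n + 1))) :
    (dropLast G).support ⊆ ↑(Finset.univ.erase (Fin.last n)) := by
  rintro a ⟨b, hab⟩
  simpa using hab.2.1

lemma edgeWeight_eq_dropLast_add (G : SimpleGraph (Fin (n + 1))) (a b : Fin (n + 1)) :
    edgeWeight G a b = edgeWeight (dropLast G) a b +
      ((if b = Fin.last n then edgeWeight G a b else 0) +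
        if a = Fin.last n then edgeWeight G a b else 0) := by
  by_cases ha : a = Fin.last n <;> by_cases hb : b = Fin.last n
  · subst ha; subst hb
    simp [edgeWeight]
  all_goals simp [edgeWeight, dropLast, ha, hb]

lemma dirichlet_eq_dropLast_add (G : SimpleGraph (Fin (n + 1))) (ψ : Fin (n + 1) → ℝ) :
    dirichlet G ψ = dirichlet (dropLast G) ψ +
      ∑ a, edgeWeight G a (Fin.last n) * (ψ a - ψ (Fin.last n)) ^ 2 := by
  have hcol : ∑ a, ∑ b, (if b = Fin.last n then edgeWeight G a b else 0) * (ψ a - ψ b) ^ 2 =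
      ∑ a, edgeWeight G a (Fin.last n) * (ψ a - ψ (Fin.last n)) ^ 2 :=
    Finset.sum_congr rfl fun a _ => by
      simp only [ite_mul, zero_mul, Finset.sum_ite_eq', Finset.mem_univ, if_true]
  have hrow : ∑ a, ∑ b, (if a = Fin.last n then edgeWeight G a b else 0) * (ψ a - ψ b) ^ 2 =
      ∑ a, edgeWeight G a (Fin.last n) * (ψ a - ψ (Fin.last n)) ^ 2 := by
    rw [Finset.sum_comm]
    refine Finset.sum_congr rfl fun b _ => ?_
    simp only [ite_mul, zero_mul, Finset.sum_ite_eq', Finset.mem_univ, if_true]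
    rw [edgeWeight_comm]
    ring
  have hsplit : ∑ a, ∑ b, edgeWeight G a b * (ψ a - ψ b) ^ 2 =
      ∑ a, ∑ b, edgeWeight (dropLast G) a b * (ψ a - ψ b) ^ 2 +
        (∑ a, ∑ b, (if b = Fin.last n then edgeWeight G a b else 0) * (ψ a - ψ b) ^ 2 +
          ∑ a, ∑ b, (if a = Fin.last n then edgeWeight G a b else 0) * (ψ a - ψ b) ^ 2) := by
    simp only [← Finset.sum_add_distrib]
    exact Finset.sum_congr rfl fun a _ => Finset.sum_congr rfl fun b _ => by
      conv_lhs => rw [edgeWeight_eq_dropLast_add]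
      ring
  rw [dirichlet, dirichlet, hsplit, hcol, hrow]
  ring

/-- A spectral gap `gap` of the graph on the old vertices bounds both the old resistance
`R ≤ 2 / gap` and, through the centered potential, the energy `D ≤ R / gap` of the star of
the new vertex. -/
lemma abs_renRes_sub_renRes_dropLast_le (G : SimpleGraph (Fin (n + 1))) {gap : ℝ}
    (hgap : 0 < gap) (hP : HasSpectralGap (dropLast G) (Finset.univ.erase (Fin.last n)) gap)
    {u v : Fin (n + 1)} (hu : u ≠ Fin.last n) (hv : v ≠ Fin.last n) (huv : u ≠ v) :
    |renRes G u v - renRes (dropLast G) u v| ≤ 2 / gap ^ 2 := by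
  set T := Finset.univ.erase (Fin.last n)
  have huT : u ∈ T := Finset.mem_erase.2 ⟨hu, Finset.mem_univ u⟩
  have hvT : v ∈ T := Finset.mem_erase.2 ⟨hv, Finset.mem_univ v⟩
  obtain ⟨ψ, hψT, hψsum, hRpos, hE, heff⟩ := exists_centered_potential
    (support_dropLast_subset G) huT hvT huv fun k hk => hP.eq_of_laplacian_eq_zero hgap huT hvT hk
  set R := ψ u - ψ v
  set S := ∑ x ∈ T, ψ x ^ 2
  have hS : gap * S ≤ R := hE ▸ hP ψ hψsum
  have hR : R ≤ 2 / gap := by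
    have := sq_sub_le_two_mul_sum_sq huT hvT huv ψ
    rw [le_div_iff₀ hgap]
    nlinarith
  set D := ∑ a, edgeWeight G a (Fin.last n) * (ψ a - ψ (Fin.last n)) ^ 2
  have hD0 : 0 ≤ D := Finset.sum_nonneg fun a _ =>
    mul_nonneg (edgeWeight_nonneg G a _) (sq_nonneg _)
  have hDS : D ≤ S := by
    simp only [D, S]
    rw [← Finset.sum_erase_add _ _ (Finset.mem_univ (Fin.last n))]
    simp only [hψT _ (Finset.notMem_erase _ _), sub_self, sub_zero, sq (0 : ℝ), mul_zero, add_zero]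
    exact Finset.sum_le_sum fun a _ =>
      mul_le_of_le_one_left (sq_nonneg _) (edgeWeight_le_one G a _)
  calc |renRes G u v - renRes (dropLast G) u v| ≤ D :=
        abs_renRes_sub_le_of_le (dropLast_le G) hRpos hD0 heff ψ rfl
          (by rw [dirichlet_eq_dropLast_add, hE])
    _ ≤ 2 / gap ^ 2 := by
        rw [le_div_iff₀ (by positivity)]
        calc D * gap ^ 2 = gap * (gap * D) := by ring
          _ ≤ gap * R := mul_le_mul_of_nonneg_left (by nlinarith) hgap.le
          _ ≤ 2 := by rw [mul_comm, ← le_div_iff₀ hgap]; exact hR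

end DropLast

section ErdosRenyi

variable {n : ℕ}

instance (n : ℕ) : Fintype (EdgeSpace n) := by unfold EdgeSpace; infer_instance

instance (n : ℕ) : MeasurableSingletonClass (EdgeSpace n) := by unfold EdgeSpace; infer_instance

instance (x : ℝ≥0∞) : IsProbabilityMeasure (bernoulliMeasure x) := by
  unfold bernoulliMeasure; infer_instance

instance (n : ℕ) (p : ℝ) : IsProbabilityMeasure (erMeasure n p) := by
  constructor
  have h : (Measure.pi fun _ : Sym2 (Fin n) => bernoulliMeasure (ENNReal.ofReal p)) Set.univ = 1 :=
    by simp
  exact h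

lemma measurableSet_edgeSpace (s : Set (EdgeSpace n)) : MeasurableSet s :=
  s.toFinite.measurableSet

def erWeight (q : ℝ) (ω : EdgeSpace n) : ℝ := ∏ e, if ω e then q else 1 - q

lemma erWeight_nonneg {q : ℝ} (hq0 : 0 ≤ q) (hq1 : q ≤ 1) (ω : EdgeSpace n) :
    0 ≤ erWeight q ω :=
  Finset.prod_nonneg fun e _ => by split <;> linarith

lemma bernoulliMeasure_singleton {q : ℝ} (hq0 : 0 ≤ q) (hq1 : q ≤ 1) (b : Bool) :
    bernoulliMeasure (ENNReal.ofReal q) {b} = ENNReal.ofReal (if b then q else 1 - q) := by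
  have hmin : min (ENNReal.ofReal q) 1 = ENNReal.ofReal q :=
    min_eq_left (ENNReal.ofReal_le_one.2 hq1)
  rw [bernoulliMeasure, PMF.toMeasure_apply_singleton _ _ (measurableSet_singleton b)]
  cases b
  · simp only [PMF.bernoulli_apply, Bool.cond_false, hmin, Bool.false_eq_true, if_false]
    rw [ENNReal.coe_sub, ENNReal.coe_toNNReal ENNReal.ofReal_ne_top, ENNReal.coe_one,
      ENNReal.ofReal_sub _ hq0, ENNReal.ofReal_one]
  · simp only [PMF.bernoulli_apply, Bool.cond_true, hmin, if_true]
    exact ENNReal.coe_toNNReal ENNReal.ofReal_ne_top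

lemma erMeasure_singleton {q : ℝ} (hq0 : 0 ≤ q) (hq1 : q ≤ 1) (ω : EdgeSpace n) :
    erMeasure n q {ω} = ENNReal.ofReal (erWeight q ω) := by
  have hset : ({ω} : Set (EdgeSpace n)) = Set.univ.pi fun e => {ω e} := by
    ext ω'
    exact ⟨fun h e _ => h ▸ rfl, fun h => funext fun e => h e (Set.mem_univ e)⟩
  have hpi : erMeasure n q {ω} = ∏ e, bernoulliMeasure (ENNReal.ofReal q) {ω e} := by
    rw [erMeasure, show ({ω} : Set (EdgeSpace n)) = _ from hset]
    exact Measure.pi_pi _ _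
  rw [hpi, erWeight,
    ENNReal.ofReal_prod_of_nonneg fun e _ => by split <;> linarith]
  exact Finset.prod_congr rfl fun e _ => bernoulliMeasure_singleton hq0 hq1 (ω e)

lemma erMeasure_eq_sum {q : ℝ} (hq0 : 0 ≤ q) (hq1 : q ≤ 1) (s : Set (EdgeSpace n)) :
    erMeasure n q s = ENNReal.ofReal (∑ ω ∈ Finset.univ.filter (· ∈ s), erWeight q ω) := by
  have hs : s = ⋃ ω ∈ Finset.univ.filter (· ∈ s), {ω} := by ext; simp
  conv_lhs => rw [hs]
  rw [measure_biUnion_finset (fun a _ b _ hab => Set.disjoint_singleton.2 hab)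
      fun _ _ => measurableSet_edgeSpace _,
    ENNReal.ofReal_sum_of_nonneg fun ω _ => erWeight_nonneg hq0 hq1 ω]
  exact Finset.sum_congr rfl fun ω _ => erMeasure_singleton hq0 hq1 ω

lemma sum_pow_card_mul_erWeight (q θ : ℝ) (E₀ : Finset (Sym2 (Fin n))) :
    ∑ ω : EdgeSpace n, θ ^ (E₀.filter (ω · = true)).card * erWeight q ω =
      (1 + q * (θ - 1)) ^ E₀.card := by
  have hpow : ∀ ω : EdgeSpace n,
      θ ^ (E₀.filter (ω · = true)).card = ∏ e, if e ∈ E₀ ∧ ω e = true then θ else 1 := by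
    intro ω
    unfold EdgeSpace at ω
    rw [← Finset.prod_const, ← Finset.prod_filter]
    congr 1
    ext e
    simp
  simp only [hpow, erWeight, ← Finset.prod_mul_distrib]
  unfold EdgeSpace
  rw [← Fintype.prod_sum (fun e (b : Bool) =>
    (if e ∈ E₀ ∧ b = true then θ else 1) * if b = true then q else 1 - q)]
  have hfactor : ∀ e, ∑ b : Bool, (if e ∈ E₀ ∧ b = true then θ else 1) *
      (if b = true then q else 1 - q) = if e ∈ E₀ then 1 + q * (θ - 1) else 1 := fun e => by
    by_cases he : e ∈ E₀ <;> simp [he]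
    ring
  rw [Finset.prod_congr rfl fun e _ => hfactor e]
  simp [Finset.prod_ite_mem]

lemma erMeasure_le_of_one_le_mul_pow {q : ℝ} (hq0 : 0 ≤ q) (hq1 : q ≤ 1)
    (E₀ : Finset (Sym2 (Fin n))) {s : Set (EdgeSpace n)} {θ K : ℝ} (hθ : 0 ≤ θ) (hK : 0 ≤ K)
    (hs : ∀ ω ∈ s, 1 ≤ K * θ ^ (E₀.filter (ω · = true)).card) :
    erMeasure n q s ≤ ENNReal.ofReal (K * (1 + q * (θ - 1)) ^ E₀.card) := by
  rw [erMeasure_eq_sum hq0 hq1, ← sum_pow_card_mul_erWeight, Finset.mul_sum]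
  refine ENNReal.ofReal_le_ofReal ((Finset.sum_le_sum fun ω hω => ?_).trans
    (Finset.sum_le_sum_of_subset_of_nonneg (Finset.filter_subset _ _) fun ω _ _ => ?_))
  · rw [← mul_assoc]
    exact le_mul_of_one_le_left (erWeight_nonneg hq0 hq1 ω) (hs ω (Finset.mem_filter.1 hω).2)
  · have := erWeight_nonneg hq0 hq1 ω
    positivity

lemma erMeasure_card_le_half_le {q : ℝ} (hq0 : 0 ≤ q) (hq1 : q ≤ 1)
    (E₀ : Finset (Sym2 (Fin n))) :
    erMeasure n q {ω | 2 * ((E₀.filter (ω · = true)).card : ℝ) ≤ q * E₀.card} ≤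
      ENNReal.ofReal (Real.exp (-(q * E₀.card) / 8)) := by
  set m : ℝ := (E₀.card : ℝ)
  refine (erMeasure_le_of_one_le_mul_pow hq0 hq1 E₀ (θ := 1 / 2)
    (K := Real.exp (Real.log 2 * (q * m / 2))) (by norm_num) (Real.exp_nonneg _) ?_).trans ?_
  · intro ω hω
    have hpow : (1 / 2 : ℝ) ^ (E₀.filter (ω · = true)).card =
        Real.exp ((E₀.filter (ω · = true)).card * -Real.log 2) := by
      rw [Real.exp_nat_mul, Real.exp_neg, Real.exp_log two_pos, one_div]
    rw [hpow, ← Real.exp_add]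
    refine Real.one_le_exp ?_
    nlinarith [Real.log_pos one_lt_two,
      show 2 * ((E₀.filter (ω · = true)).card : ℝ) ≤ q * m from hω]
  · refine ENNReal.ofReal_le_ofReal ?_
    calc Real.exp (Real.log 2 * (q * m / 2)) * (1 + q * (1 / 2 - 1)) ^ E₀.card
        ≤ Real.exp (Real.log 2 * (q * m / 2)) * Real.exp (-(q / 2)) ^ E₀.card := by
          gcongr
          all_goals linarith [Real.add_one_le_exp (-(q / 2))]
      _ ≤ Real.exp (-(q * m) / 8) := by
          rw [← Real.exp_nat_mul, ← Real.exp_add, Real.exp_le_exp]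
          nlinarith [Real.log_two_lt_d9, mul_nonneg hq0 (Nat.cast_nonneg (α := ℝ) E₀.card)]

lemma erMeasure_two_mul_le_card_le {q : ℝ} (hq0 : 0 ≤ q) (hq1 : q ≤ 1)
    (E₀ : Finset (Sym2 (Fin n))) :
    erMeasure n q {ω | 2 * (q * E₀.card) ≤ ((E₀.filter (ω · = true)).card : ℝ)} ≤
      ENNReal.ofReal (Real.exp (-(q * E₀.card) / 3)) := by
  set m : ℝ := (E₀.card : ℝ)
  refine (erMeasure_le_of_one_le_mul_pow hq0 hq1 E₀ (θ := 2)
    (K := Real.exp (-(Real.log 2 * (2 * (q * m))))) (by norm_num) (Real.exp_nonneg _) ?_).trans ?_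
  · intro ω hω
    have hpow : (2 : ℝ) ^ (E₀.filter (ω · = true)).card =
        Real.exp ((E₀.filter (ω · = true)).card * Real.log 2) := by
      rw [Real.exp_nat_mul, Real.exp_log two_pos]
    rw [hpow, ← Real.exp_add]
    refine Real.one_le_exp ?_
    nlinarith [Real.log_pos one_lt_two,
      show 2 * (q * m) ≤ ((E₀.filter (ω · = true)).card : ℝ) from hω]
  · refine ENNReal.ofReal_le_ofReal ?_
    calc Real.exp (-(Real.log 2 * (2 * (q * m)))) * (1 + q * (2 - 1)) ^ E₀.card
        ≤ Real.exp (-(Real.log 2 * (2 * (q * m)))) * Real.exp q ^ E₀.card := by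
          gcongr
          all_goals linarith [Real.add_one_le_exp q]
      _ ≤ Real.exp (-(q * m) / 3) := by
          rw [← Real.exp_nat_mul, ← Real.exp_add, Real.exp_le_exp]
          nlinarith [Real.log_two_gt_d9, mul_nonneg hq0 (Nat.cast_nonneg (α := ℝ) E₀.card)]

end ErdosRenyi

section RandomGraph

def edgesBetween {α : Type*} [DecidableEq α] (A B : Finset α) : Finset (Sym2 α) :=
  (A ×ˢ B).image fun p => s(p.1, p.2)

lemma injOn_sym2_mk_product {α : Type*} {A B : Finset α} (h : Disjoint A B) :
    Set.InjOn (fun p : α × α => s(p.1, p.2)) ↑(A ×ˢ B) := by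
  rintro ⟨a, b⟩ hab ⟨a', b'⟩ hab' heq
  simp only [Finset.coe_product, Set.mem_prod, Finset.mem_coe] at hab hab'
  rcases Sym2.mk_eq_mk_iff.1 heq with h' | h'
  · exact h'
  · simp only [Prod.swap_prod_mk, Prod.mk.injEq] at h'
    exact absurd (h'.1 ▸ hab'.2) (Finset.disjoint_left.1 h hab.1)

lemma card_edgesBetween {α : Type*} [DecidableEq α] {A B : Finset α} (h : Disjoint A B) :
    (edgesBetween A B).card = A.card * B.card := by
  rw [edgesBetween, Finset.card_image_of_injOn (injOn_sym2_mk_product h), Finset.card_product]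

variable {n : ℕ}

lemma cutWeight_graphOf (ω : EdgeSpace n) {A B : Finset (Fin n)} (h : Disjoint A B) :
    cutWeight (graphOf ω) A B = ((edgesBetween A B).filter (ω · = true)).card := by
  rw [edgesBetween, Finset.filter_image,
    Finset.card_image_of_injOn ((injOn_sym2_mk_product h).mono fun _ hx => by
      simp only [Finset.coe_filter, Set.mem_ofPred_eq] at hx; exact hx.1),
    cutWeight, ← Finset.sum_product', ← Finset.sum_boole]
  refine Finset.sum_congr rfl fun ⟨a, b⟩ hab => ?_
  have hne : a ≠ b := fun hab' =>
    Finset.disjoint_left.1 h (Finset.mem_product.1 hab).1 (hab' ▸ (Finset.mem_product.1 hab).2)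
  simp [edgeWeight, graphOf, hne]

lemma cutWeight_dropLast (G : SimpleGraph (Fin (n + 1))) {A B : Finset (Fin (n + 1))}
    (hA : Fin.last n ∉ A) (hB : Fin.last n ∉ B) : cutWeight (dropLast G) A B = cutWeight G A B :=
  Finset.sum_congr rfl fun a ha => Finset.sum_congr rfl fun b hb => by
    simp [edgeWeight, dropLast, ne_of_mem_of_not_mem ha hA, ne_of_mem_of_not_mem hb hB]

lemma sum_edgeWeight_eq_cutWeight {V : Type*} [Fintype V] [DecidableEq V] (G : SimpleGraph V)
    (a : V) :
    ∑ b, edgeWeight G a b = cutWeight G {a} (Finset.univ.erase a) := by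
  rw [cutWeight, Finset.sum_singleton, ← Finset.add_sum_erase _ _ (Finset.mem_univ a),
    edgeWeight_of_not_adj (G.loopless.irrefl a), zero_add]

lemma sum_pow_card_le_one_add_pow_sub_one {α : Type*} [DecidableEq α] {T : Finset α}
    {C : Finset (Finset α)} {r : ℝ} (hr : 0 ≤ r) (hC : C ⊆ T.powerset.erase ∅) :
    ∑ S ∈ C, r ^ S.card ≤ (1 + r) ^ T.card - 1 := by
  have hall : ∑ S ∈ T.powerset, r ^ S.card = (1 + r) ^ T.card := by
    simpa [add_comm] using Finset.sum_pow_mul_eq_add_pow r 1 T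
  calc ∑ S ∈ C, r ^ S.card ≤ ∑ S ∈ T.powerset.erase ∅, r ^ S.card :=
        Finset.sum_le_sum_of_subset_of_nonneg hC fun S _ _ => pow_nonneg hr _
    _ = (1 + r) ^ T.card - 1 := by
        rw [← hall, ← Finset.sum_erase_add _ _ (Finset.empty_mem_powerset T)]
        simp

/-- Every cut `(S, T \ S)` with `|S| ≤ |T| / 2` has at least `|S| n / 2` potential edges, and
the probability that fewer than half of them are present is at most `exp(-q n / 16) ^ |S|`;
summing over `S` gives `(1 + exp(-q n / 16)) ^ n - 1`. -/
lemma erMeasure_not_hasCutExpansion_le {q : ℝ} (hq0 : 0 ≤ q) (hq1 : q ≤ 1) :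
    erMeasure (n + 1) q
        {ω | ¬ HasCutExpansion (dropLast (graphOf ω)) (Finset.univ.erase (Fin.last n)) (n * q / 4)}
      ≤ ENNReal.ofReal ((1 + Real.exp (-(q * n) / 16)) ^ n - 1) := by
  set T := Finset.univ.erase (Fin.last n)
  have hTcard : T.card = n := by simp [T]
  set r := Real.exp (-(q * n) / 16)
  set E : Finset (Fin (n + 1)) → Finset (Sym2 (Fin (n + 1))) := fun S => edgesBetween S (T \ S)
  set cand := T.powerset.filter fun S => S.Nonempty ∧ 2 * S.card ≤ n
  have hEcard : ∀ S ∈ cand, (n : ℝ) * S.card / 2 ≤ (E S).card := fun S hS => by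
    obtain ⟨hST, -, hhalf⟩ := Finset.mem_filter.1 hS
    rw [card_edgesBetween Finset.disjoint_sdiff,
      Finset.card_sdiff_of_subset (Finset.mem_powerset.1 hST), hTcard]
    have hle : (2 * S.card : ℝ) ≤ n := by exact_mod_cast hhalf
    rw [Nat.cast_mul, Nat.cast_sub (by omega)]
    nlinarith [(S.card.cast_nonneg : (0 : ℝ) ≤ S.card)]
  have hsub : {ω | ¬ HasCutExpansion (dropLast (graphOf ω)) T (n * q / 4)} ⊆
      ⋃ S ∈ cand, {ω | 2 * (((E S).filter (ω · = true)).card : ℝ) ≤ q * (E S).card} := by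
    intro ω hω
    simp only [HasCutExpansion, Set.mem_ofPred_eq, not_forall, not_le, exists_prop] at hω
    obtain ⟨S, hST, hSne, hhalf, hcut⟩ := hω
    have hS : S ∈ cand :=
      Finset.mem_filter.2 ⟨Finset.mem_powerset.2 hST, hSne, hhalf.trans_eq hTcard⟩
    refine Set.mem_biUnion hS ?_
    rw [cutWeight_dropLast _ (fun h => by simpa [T] using hST h) (by simp [T]),
      cutWeight_graphOf ω Finset.disjoint_sdiff] at hcut
    change (2 : ℝ) * _ ≤ _
    nlinarith [hEcard S hS]
  calc _ ≤ ∑ S ∈ cand, erMeasure (n + 1) q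
          {ω | 2 * (((E S).filter (ω · = true)).card : ℝ) ≤ q * (E S).card} :=
        (measure_mono hsub).trans (measure_biUnion_finset_le _ _)
    _ ≤ ∑ S ∈ cand, ENNReal.ofReal (r ^ S.card) := Finset.sum_le_sum fun S hS => by
        refine (erMeasure_card_le_half_le hq0 hq1 (E S)).trans (ENNReal.ofReal_le_ofReal ?_)
        rw [← Real.exp_nat_mul, Real.exp_le_exp]
        nlinarith [hEcard S hS]
    _ = ENNReal.ofReal (∑ S ∈ cand, r ^ S.card) :=
        (ENNReal.ofReal_sum_of_nonneg fun S _ => pow_nonneg (Real.exp_nonneg _) _).symm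
    _ ≤ ENNReal.ofReal ((1 + r) ^ n - 1) := by
        refine ENNReal.ofReal_le_ofReal ((sum_pow_card_le_one_add_pow_sub_one
          (Real.exp_nonneg _) fun S hS => ?_).trans_eq (by rw [hTcard]))
        obtain ⟨hST, hSne, -⟩ := Finset.mem_filter.1 hS
        exact Finset.mem_erase.2 ⟨hSne.ne_empty, hST⟩

lemma erMeasure_exists_degree_gt_le {q : ℝ} (hq0 : 0 ≤ q) (hq1 : q ≤ 1) :
    erMeasure (n + 1) q {ω | ∃ a, 2 * (q * n) < ∑ b, edgeWeight (graphOf ω) a b} ≤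
      (n + 1) * ENNReal.ofReal (Real.exp (-(q * n) / 3)) := by
  set E : Fin (n + 1) → Finset (Sym2 (Fin (n + 1))) :=
    fun a => edgesBetween {a} (Finset.univ.erase a)
  have hEcard : ∀ a, (E a).card = n := fun a => by
    rw [card_edgesBetween (Finset.disjoint_singleton_left.2 (Finset.notMem_erase a _))]
    simp
  have hsub : {ω | ∃ a, 2 * (q * n) < ∑ b, edgeWeight (graphOf ω) a b} ⊆
      ⋃ a ∈ Finset.univ, {ω | 2 * (q * (E a).card) ≤ (((E a).filter (ω · = true)).card : ℝ)} := by
    rintro ω ⟨a, ha⟩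
    refine Set.mem_biUnion (Finset.mem_univ a) ?_
    rw [sum_edgeWeight_eq_cutWeight, cutWeight_graphOf ω
      (Finset.disjoint_singleton_left.2 (Finset.notMem_erase a _))] at ha
    change (2 : ℝ) * _ ≤ _
    rw [hEcard]
    exact ha.le
  calc _ ≤ ∑ a, erMeasure (n + 1) q
          {ω | 2 * (q * (E a).card) ≤ (((E a).filter (ω · = true)).card : ℝ)} :=
        (measure_mono hsub).trans (measure_biUnion_finset_le _ _)
    _ ≤ ∑ _a : Fin (n + 1), ENNReal.ofReal (Real.exp (-(q * n) / 3)) :=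
        Finset.sum_le_sum fun a _ => by
          simpa only [hEcard] using erMeasure_two_mul_le_card_le hq0 hq1 (E a)
    _ = (n + 1) * ENNReal.ofReal (Real.exp (-(q * n) / 3)) := by simp

end RandomGraph

/-- With expansion `h = n q / 4` and maximal degree `d = 2 q n`, Cheeger's inequality gives the
spectral gap `h² / (2 d) = n q / 64`, hence the constant `2 · 64² = 8192`. -/
lemma abs_renRes_sub_renRes_dropLast_le_of_expansion {n : ℕ} (G : SimpleGraph (Fin (n + 1)))
    {q : ℝ} (hq : 0 < q)
    (hexp : HasCutExpansion (dropLast G) (Finset.univ.erase (Fin.last n)) (n * q / 4))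
    (hdeg : ∀ a, ∑ b, edgeWeight G a b ≤ 2 * (q * n))
    {u v : Fin (n + 1)} (hu : u ≠ Fin.last n) (hv : v ≠ Fin.last n) (huv : u ≠ v) :
    |renRes G u v - renRes (dropLast G) u v| ≤ 8192 / (n * q) ^ 2 := by
  have hn : (0 : ℝ) < n := by
    have := Fin.val_lt_last hu
    exact_mod_cast (Nat.zero_le _).trans_lt this
  have hgap := hexp.hasSpectralGap (support_dropLast_subset G) (by positivity)
    (by positivity : (0 : ℝ) < 2 * (q * n)) fun a =>
      (Finset.sum_le_sum fun b _ => edgeWeight_mono (dropLast_le G) a b).trans (hdeg a)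
  have hgap_eq : (n * q / 4) ^ 2 / (2 * (2 * (q * n))) = n * q / 64 := by
    field_simp; ring
  rw [hgap_eq] at hgap
  calc _ ≤ 2 / (n * q / 64) ^ 2 :=
        abs_renRes_sub_renRes_dropLast_le G (by positivity) hgap hu hv huv
    _ = 8192 / (n * q) ^ 2 := by field_simp; norm_num

lemma erMeasure_not_hasCutExpansion_union_le {n : ℕ} {q : ℝ} (hq0 : 0 ≤ q) (hq1 : q ≤ 1) :
    erMeasure (n + 1) q
        ({ω | ¬ HasCutExpansion (dropLast (graphOf ω)) (Finset.univ.erase (Fin.last n))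
            (n * q / 4)} ∪ {ω | ∃ a, 2 * (q * n) < ∑ b, edgeWeight (graphOf ω) a b})
      ≤ ENNReal.ofReal ((1 + Real.exp (-(q * n) / 16)) ^ n - 1 +
          (n + 1) * Real.exp (-(q * n) / 16)) := by
  have hr : Real.exp (-(q * n) / 3) ≤ Real.exp (-(q * n) / 16) := by
    rw [Real.exp_le_exp]
    nlinarith [mul_nonneg hq0 (n.cast_nonneg : (0 : ℝ) ≤ n)]
  have hpow : 0 ≤ (1 + Real.exp (-(q * n) / 16)) ^ n - 1 :=
    sub_nonneg.2 (one_le_pow₀ (le_add_of_nonneg_right (Real.exp_nonneg _)))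
  calc _ ≤ _ := measure_union_le _ _
    _ ≤ ENNReal.ofReal ((1 + Real.exp (-(q * n) / 16)) ^ n - 1) +
          (n + 1) * ENNReal.ofReal (Real.exp (-(q * n) / 16)) := by
        gcongr
        · exact erMeasure_not_hasCutExpansion_le hq0 hq1
        · exact (erMeasure_exists_degree_gt_le hq0 hq1).trans (by gcongr)
    _ = _ := by
        rw [ENNReal.ofReal_add hpow (by positivity), ENNReal.ofReal_mul (by positivity)]
        norm_cast

lemma eventually_exp_neg_mul_div_sixteen_le {p : ℕ → ℝ}
    (hpω : Tendsto (fun n : ℕ => p n * n / Real.log n) atTop atTop) :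
    ∀ᶠ n : ℕ in atTop, Real.exp (-(p n * n) / 16) ≤ 1 / (n : ℝ) ^ 2 := by
  filter_upwards [hpω.eventually_ge_atTop 32, eventually_ge_atTop 2] with n h32 hn
  have hn' : (1 : ℝ) < n := by exact_mod_cast hn
  have hlog : 0 < Real.log n := Real.log_pos hn'
  rw [le_div_iff₀ hlog] at h32
  rw [one_div, ← Real.exp_log (by positivity : (0 : ℝ) < (n : ℝ) ^ 2), ← Real.exp_neg,
    Real.exp_le_exp, Real.log_pow]
  push_cast
  linarith

/-- With `e := exp(-p n / 16) ≤ n⁻²`, the bound is at most `exp(1 / n) - 1 + 2 / n`. -/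
lemma tendsto_one_add_exp_pow_sub_one_add_mul_exp {p : ℕ → ℝ}
    (hpω : Tendsto (fun n : ℕ => p n * n / Real.log n) atTop atTop) :
    Tendsto (fun n : ℕ => (1 + Real.exp (-(p n * n) / 16)) ^ n - 1 +
      (n + 1) * Real.exp (-(p n * n) / 16)) atTop (𝓝 0) := by
  have hlim : Tendsto (fun n : ℕ => Real.exp (1 / n) - 1 + 2 * (1 / n)) atTop (𝓝 0) := by
    have h := ((Real.continuous_exp.tendsto 0).comp tendsto_one_div_atTop_nhds_zero_nat).sub_const 1
      |>.add (tendsto_one_div_atTop_nhds_zero_nat.const_mul 2)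
    simpa using h
  refine tendsto_of_tendsto_of_tendsto_of_le_of_le' tendsto_const_nhds hlim
    (Eventually.of_forall fun n => ?_) ?_
  · exact add_nonneg (sub_nonneg.2 (one_le_pow₀ (le_add_of_nonneg_right (Real.exp_nonneg _))))
      (by positivity)
  filter_upwards [eventually_exp_neg_mul_div_sixteen_le hpω, eventually_ge_atTop 1] with n he hn
  set e := Real.exp (-(p n * n) / 16)
  have hn' : (1 : ℝ) ≤ n := by exact_mod_cast hn
  have hpow : (1 + e) ^ n ≤ Real.exp (1 / n) := by
    calc (1 + e) ^ n ≤ Real.exp e ^ n :=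
          pow_le_pow_left₀ (by positivity) (by linarith [Real.add_one_le_exp e]) n
      _ = Real.exp (n * e) := (Real.exp_nat_mul e n).symm
      _ ≤ Real.exp (1 / n) := by
          rw [Real.exp_le_exp]
          calc n * e ≤ n * (1 / n ^ 2) := by gcongr
            _ = 1 / n := by field_simp
  have hlin : (n + 1) * e ≤ 2 * (1 / n) := by
    calc (n + 1) * e ≤ (n + 1) * (1 / n ^ 2) := by gcongr
      _ = (n + 1) / n ^ 2 := by ring
      _ ≤ 2 * n / n ^ 2 := div_le_div_of_nonneg_right (by linarith) (by positivity)
      _ = 2 * (1 / n) := by field_simp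
  linarith

lemma tendsto_measure_one_of_compl_subset {Ω : ℕ → Type*} [∀ n, MeasurableSpace (Ω n)]
    {μ : ∀ n, Measure (Ω n)} [∀ n, IsProbabilityMeasure (μ n)] {A B : ∀ n, Set (Ω n)}
    (hAB : ∀ n, (B n)ᶜ ⊆ A n) (hB : Tendsto (fun n => μ n (B n)) atTop (𝓝 0)) :
    Tendsto (fun n => μ n (A n)) atTop (𝓝 1) := by
  have hlow : Tendsto (fun n => 1 - μ n (B n)) atTop (𝓝 1) := by
    have h := ((ENNReal.continuous_sub_left ENNReal.one_ne_top).tendsto 0).comp hB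
    rwa [tsub_zero] at h
  refine tendsto_of_tendsto_of_tendsto_of_le_of_le hlow tendsto_const_nhds (fun n => ?_)
    fun n => prob_le_one
  calc 1 - μ n (B n) ≤ 1 - μ n (A n)ᶜ :=
        tsub_le_tsub_left (measure_mono (Set.compl_subset_comm.1 (hAB n))) 1
    _ ≤ μ n (A n) := by
        rw [tsub_le_iff_right, ← measure_univ (μ := μ n)]
        exact measure_univ_le_add_compl _

/-- for `G_{n+1} ~ G(n+1,pₙ)` with `pₙ = ω(log n / n)` and `G_n` its induced
subgraph on `{1,…,n}`, w.h.p. all renormalized effective resistances between vertices of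
`{1,…,n}` change by at most `c/d̄²`, where `d̄ = (n-1)pₙ`. -/
theorem er_renRes_perturbation_new_vertex (p : ℕ → ℝ)
    (hp : ∀ n, p n ∈ Set.Ioo (0 : ℝ) 1)
    (hpω : Tendsto (fun n : ℕ => p n * n / Real.log n) atTop atTop) :
    ∃ c > (0 : ℝ), Tendsto (fun n : ℕ =>
        erMeasure (n + 1) (p n) {ω : EdgeSpace (n + 1) |
          ∀ u v : Fin (n + 1), u ≠ Fin.last n → v ≠ Fin.last n → u < v →
            |renRes (graphOf ω) u v - renRes (dropLast (graphOf ω)) u v|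
              ≤ c / (((n : ℝ) - 1) * p n) ^ 2})
      atTop (𝓝 1) := by
  have hp0 : ∀ n, 0 < p n := fun n => (hp n).1
  have hbad := tendsto_of_tendsto_of_tendsto_of_le_of_le tendsto_const_nhds
    (ENNReal.ofReal_zero ▸ ENNReal.tendsto_ofReal (tendsto_one_add_exp_pow_sub_one_add_mul_exp hpω))
    (fun _ => bot_le) fun n => erMeasure_not_hasCutExpansion_union_le (hp0 n).le (hp n).2.le
  refine ⟨8192, by norm_num, tendsto_measure_one_of_compl_subset (fun n ω hω => ?_) hbad⟩
  simp only [Set.mem_compl_iff, Set.mem_union, Set.mem_ofPred_eq, not_or, not_not, not_exists,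
    not_lt] at hω
  intro u v hu hv huv
  have hn : (2 : ℝ) ≤ n := by
    have huv' : (u : ℕ) < v := huv
    have hv' := Fin.val_lt_last hv
    exact_mod_cast (show 2 ≤ n by omega)
  calc _ ≤ 8192 / (n * p n) ^ 2 :=
        abs_renRes_sub_renRes_dropLast_le_of_expansion _ (hp0 n) hω.1 hω.2 hu hv huv.ne
    _ ≤ 8192 / ((n - 1) * p n) ^ 2 := by
        have hpos : 0 < (n - 1 : ℝ) * p n := mul_pos (by linarith) (hp0 n)
        exact div_le_div_of_nonneg_left (by norm_num) (pow_pos hpos 2)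
          (pow_le_pow_left₀ hpos.le (by nlinarith [hp0 n]) 2)

end RP
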